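/- arXiv:2402.15190 — 2 statements merged into one kernel-verified Lean document; each statement's English description precedes it below -/
import Mathlib

section
/- For real numbers t < b, the integral (1/(2π)) ∫_t^b (x · 4x³)/√((b−x)(x−t)) dx equals (35b⁴ + 20b³t + 18b²t² + 20bt³ + 35t⁴)/64. -/
/-!
With `c = (b + t)/2`, `r = (b - t)/2`, the substitution `x = c + r sin θ` on `(-π/2, π/2)` has
`dx = r cos θ dθ = √((b - x)(x - t)) dθ`, so the arcsine weight disappears and the integral becomes
`(1/2π) ∫ 4 (c + r sin θ)⁴ dθ`. Expanding, the odd powers of `sin` integrate to zero and the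
reduction formula `∫ sin^(n+2) = (n+1)/(n+2) ∫ sin^n` gives the even moments `π, π/2, 3π/8`.
-/

open Real MeasureTheory Set intervalIntegral

lemma strictMonoOn_add_mul_sin {c r : ℝ} (hr : 0 < r) :
    StrictMonoOn (fun θ => c + r * sin θ) (Icc (-(π / 2)) (π / 2)) :=
  ((strictMono_mul_left_of_pos hr).comp_strictMonoOn strictMonoOn_sin).const_add c

lemma image_add_mul_sin_Ioo {c r : ℝ} (hr : 0 < r) :
    (fun θ => c + r * sin θ) '' Ioo (-(π / 2)) (π / 2) = Ioo (c - r) (c + r) := by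
  rw [(by fun_prop : Continuous fun θ => c + r * sin θ).continuousOn.image_Ioo_of_strictMonoOn
    (by linarith [pi_div_two_pos]) (strictMonoOn_add_mul_sin hr)]
  simp [sub_eq_add_neg]

-- No integrability hypothesis is needed: the change of variables holds for Bochner integrals
-- unconditionally, both sides vanishing together when `f` is not integrable.
theorem integral_div_sqrt_eq_integral_sin {t b : ℝ} (htb : t < b) (f : ℝ → ℝ) :
    ∫ x in t..b, f x / √((b - x) * (x - t))
      = ∫ θ in -(π / 2)..π / 2, f ((b + t) / 2 + (b - t) / 2 * sin θ) := by
  set c := (b + t) / 2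
  set r := (b - t) / 2
  have hr : 0 < r := by simp only [r]; linarith
  have himage := image_add_mul_sin_Ioo (c := c) hr
  rw [show c - r = t by ring, show c + r = b by ring] at himage
  have hderiv : ∀ θ ∈ Ioo (-(π / 2)) (π / 2),
      HasDerivWithinAt (fun θ => c + r * sin θ) (r * cos θ) (Ioo (-(π / 2)) (π / 2)) θ :=
    fun θ _ => (((hasDerivAt_sin θ).const_mul r).const_add c).hasDerivWithinAt
  rw [integral_of_le htb.le, integral_of_le (by linarith [pi_div_two_pos]),
    integral_Ioc_eq_integral_Ioo, integral_Ioc_eq_integral_Ioo, ← himage,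
    integral_image_eq_integral_abs_deriv_smul measurableSet_Ioo hderiv
      ((strictMonoOn_add_mul_sin hr).injOn.mono Ioo_subset_Icc_self)]
  refine setIntegral_congr_fun measurableSet_Ioo fun θ hθ => ?_
  have hrcos : 0 < r * cos θ := mul_pos hr (cos_pos_of_mem_Ioo hθ)
  have hsq : (b - (c + r * sin θ)) * (c + r * sin θ - t) = (r * cos θ) ^ 2 := by
    linear_combination (-r ^ 2) * sin_sq_add_cos_sq θ
  rw [smul_eq_mul, hsq, sqrt_sq hrcos.le, abs_of_pos hrcos, mul_div_cancel₀ _ hrcos.ne']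

lemma integral_sin_pow_add_two_neg_pi_div_two (n : ℕ) :
    ∫ θ in -(π / 2)..π / 2, sin θ ^ (n + 2)
      = (n + 1) / (n + 2) * ∫ θ in -(π / 2)..π / 2, sin θ ^ n := by
  simp [integral_sin_pow]

theorem integral_add_mul_sin_pow_four (c r : ℝ) :
    ∫ θ in -(π / 2)..π / 2, (c + r * sin θ) ^ 4 = π * (c ^ 4 + 3 * c ^ 2 * r ^ 2 + 3 * r ^ 4 / 8) := by
  have h0 : ∫ θ in -(π / 2)..π / 2, sin θ ^ 0 = π := by simp
  have h1 : ∫ θ in -(π / 2)..π / 2, sin θ ^ 1 = 0 := by simp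
  have h2 : ∫ θ in -(π / 2)..π / 2, sin θ ^ 2 = π / 2 := by
    rw [integral_sin_pow_add_two_neg_pi_div_two 0, h0]; ring
  have h3 : ∫ θ in -(π / 2)..π / 2, sin θ ^ 3 = 0 := by
    rw [integral_sin_pow_add_two_neg_pi_div_two 1, h1, mul_zero]
  have h4 : ∫ θ in -(π / 2)..π / 2, sin θ ^ 4 = 3 * π / 8 := by
    rw [integral_sin_pow_add_two_neg_pi_div_two 2, h2]; norm_num; ring
  have hexpand : ∀ θ, (c + r * sin θ) ^ 4
      = ∑ k ∈ Finset.range 5, (Nat.choose 4 k * c ^ (4 - k) * r ^ k) * sin θ ^ k := by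
    intro θ; simp [Finset.sum_range_succ, Nat.choose]; ring
  simp_rw [hexpand]
  rw [integral_finsetSum fun k _ => (by fun_prop : Continuous _).intervalIntegrable _ _]
  simp only [Finset.sum_range_succ, Finset.sum_range_zero, intervalIntegral.integral_const_mul,
    h0, h1, h2, h3, h4]
  norm_num [Nat.choose]
  ring

/-- Coulomb fluid integral for the quartic Freud weight (`v₀'(x) = 4x³`):
`(1/(2π)) ∫_t^b x·4x³/√((b-x)(x-t)) dx = (35b⁴ + 20b³t + 18b²t² + 20bt³ + 35t⁴)/64`. -/
theorem coulomb_integral_quartic (t b : ℝ) (htb : t < b) :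
    (1 / (2 * π)) * ∫ x in t..b, (x * (4 * x ^ 3)) / Real.sqrt ((b - x) * (x - t))
      = (35 * b ^ 4 + 20 * b ^ 3 * t + 18 * b ^ 2 * t ^ 2 + 20 * b * t ^ 3
          + 35 * t ^ 4) / 64 := by
  rw [integral_div_sqrt_eq_integral_sin htb]
  simp_rw [show ∀ x : ℝ, x * (4 * x ^ 3) = 4 * x ^ 4 from fun x => by ring]
  rw [intervalIntegral.integral_const_mul, integral_add_mul_sin_pow_four]
  field_simp
  ring
end

section
/- Let w(x;t) = w0(x)(A + Bθ(x−t)) as above, with monic orthogonal polynomials P_n(x;t), sub-leading coefficients p(n,t), and r_n(t) := B w0(t) P_n(t;t) P_{n-1}(t;t)/h_{n-1}(t). Then d/dt p(n,t) = r_n(t), and consequently the diagonal recurrence coefficient satisfies α_n'(t) = r_n(t) − r_{n+1}(t). -/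
open MeasureTheory Polynomial

section Helpers
open Set
open scoped ENNReal

lemma integrable_pow_w0 {w0 : ℝ → ℝ} (hw0c : Continuous w0) (hw0_pos : ∀ x, 0 < w0 x)
    (hmom : ∀ k : ℕ, Integrable (fun x : ℝ => |x| ^ k * w0 x)) (k : ℕ) :
    Integrable (fun x : ℝ => x ^ k * w0 x) := by
  refine (hmom k).mono' ((continuous_pow k).mul hw0c).aestronglyMeasurable ?_
  filter_upwards with x
  rw [Real.norm_eq_abs, abs_mul, abs_pow, abs_of_pos (hw0_pos x)]

lemma weight_meas (A B t : ℝ) :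
    AEStronglyMeasurable (fun x : ℝ => A + B * (if t < x then (1:ℝ) else 0)) volume := by
  have : Measurable (fun x : ℝ => A + B * (if t < x then (1:ℝ) else 0)) := by
    refine measurable_const.add (measurable_const.mul ?_)
    exact Measurable.ite measurableSet_Ioi measurable_const measurable_const
  exact this.aestronglyMeasurable

lemma weight_bdd (A B t : ℝ) (x : ℝ) : ‖A + B * (if t < x then (1:ℝ) else 0)‖ ≤ |A| + |B| := by
  rw [Real.norm_eq_abs]
  refine (abs_add_le _ _).trans ?_
  have : |B * (if t < x then (1:ℝ) else 0)| ≤ |B| := by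
    rw [abs_mul]
    split <;> simp [abs_nonneg]
  linarith

lemma integrable_poly_weight {w0 : ℝ → ℝ} {A B : ℝ} (hw0c : Continuous w0)
    (hw0_pos : ∀ x, 0 < w0 x)
    (hmom : ∀ k : ℕ, Integrable (fun x : ℝ => |x| ^ k * w0 x)) (Q : Polynomial ℝ) (t : ℝ) :
    Integrable (fun x : ℝ => Q.eval x * (w0 x * (A + B * (if t < x then (1:ℝ) else 0)))) := by
  have hQw : Integrable (fun x : ℝ => Q.eval x * w0 x) := by
    have heq : (fun x : ℝ => Q.eval x * w0 x)
        = fun x => ∑ k ∈ Finset.range (Q.natDegree + 1), Q.coeff k * (x ^ k * w0 x) := by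
      funext x
      rw [eval_eq_sum_range, Finset.sum_mul]
      exact Finset.sum_congr rfl fun k _ => by ring
    rw [heq]
    exact integrable_finset_sum _ fun k _ =>
      (integrable_pow_w0 hw0c hw0_pos hmom k).const_mul _
  have := hQw.bdd_mul (c := |A| + |B|) (weight_meas A B t) (Filter.Eventually.of_forall (weight_bdd A B t))
  exact this.congr (Filter.Eventually.of_forall fun x => by ring)

lemma integral_sq_weight_pos {w0 : ℝ → ℝ} {A B : ℝ} (hw0c : Continuous w0)
    (hw0_pos : ∀ x, 0 < w0 x)
    (hmom : ∀ k : ℕ, Integrable (fun x : ℝ => |x| ^ k * w0 x))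
    (hA : 0 ≤ A) (hAB : 0 ≤ A + B) (hnz : ¬(A = 0 ∧ A + B = 0))
    (Q : Polynomial ℝ) (hQ : Q ≠ 0) (t : ℝ) :
    0 < ∫ x : ℝ, (Q.eval x) ^ 2 * (w0 x * (A + B * (if t < x then (1:ℝ) else 0))) := by
  set f : ℝ → ℝ := fun x => (Q.eval x) ^ 2 * (w0 x * (A + B * (if t < x then (1:ℝ) else 0)))
    with hf
  have hwnn : ∀ x : ℝ, 0 ≤ A + B * (if t < x then (1:ℝ) else 0) := by
    intro x; split <;> simpa
  have hnn : ∀ x, 0 ≤ f x := fun x =>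
    mul_nonneg (sq_nonneg _) (mul_nonneg (hw0_pos x).le (hwnn x))
  have hint : Integrable f := by
    have := integrable_poly_weight (A:=A) (B:=B) hw0c hw0_pos hmom (Q * Q) t
    refine this.congr (Filter.Eventually.of_forall fun x => ?_)
    simp [hf, eval_mul, sq]
  rw [integral_pos_iff_support_of_nonneg hnn hint]
  have hZ : Set.Finite {x : ℝ | Q.IsRoot x} := Q.finite_setOf_isRoot hQ
  have hZ0 : volume {x : ℝ | Q.IsRoot x} = 0 := hZ.countable.measure_zero _
  rcases eq_or_lt_of_le hA with hA0 | hApos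
  · have hABpos : 0 < A + B := lt_of_le_of_ne hAB fun hc => hnz ⟨hA0.symm, hc.symm⟩
    have hsub : Ioi t \ {x : ℝ | Q.IsRoot x} ⊆ Function.support f := by
      rintro x ⟨hx1, hx2⟩
      have : (if t < x then (1:ℝ) else 0) = 1 := if_pos hx1
      simp only [Function.mem_support, hf, this]
      intro hc
      rcases mul_eq_zero.1 hc with h1 | h2
      · exact hx2 (pow_eq_zero_iff (by norm_num) |>.1 h1)
      · rcases mul_eq_zero.1 h2 with h3 | h4
        · exact (hw0_pos x).ne' h3
        · rw [mul_one] at h4; exact hABpos.ne' h4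
    calc (0:ℝ≥0∞) < volume (Ioi t \ {x : ℝ | Q.IsRoot x}) := by
          rw [measure_diff_null hZ0, Real.volume_Ioi]; simp
      _ ≤ volume (Function.support f) := measure_mono hsub
  · have hsub : Iio t \ {x : ℝ | Q.IsRoot x} ⊆ Function.support f := by
      rintro x ⟨hx1, hx2⟩
      have hnot : ¬ t < x := not_lt.2 (le_of_lt hx1)
      have : (if t < x then (1:ℝ) else 0) = 0 := if_neg hnot
      simp only [Function.mem_support, hf, this]
      intro hc
      rcases mul_eq_zero.1 hc with h1 | h2
      · exact hx2 (pow_eq_zero_iff (by norm_num) |>.1 h1)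
      · rcases mul_eq_zero.1 h2 with h3 | h4
        · exact (hw0_pos x).ne' h3
        · rw [mul_zero, add_zero] at h4; exact hApos.ne' h4
    calc (0:ℝ≥0∞) < volume (Iio t \ {x : ℝ | Q.IsRoot x}) := by
          rw [measure_diff_null hZ0, Real.volume_Iio]; simp
      _ ≤ volume (Function.support f) := measure_mono hsub

lemma integral_Ioi_split {f : ℝ → ℝ} (hf : Integrable f) (a b : ℝ) :
    ∫ x in Ioi a, f x = (∫ x in a..b, f x) + ∫ x in Ioi b, f x := by
  have key : ∀ u v : ℝ, u ≤ v →
      ∫ x in Ioi u, f x = (∫ x in u..v, f x) + ∫ x in Ioi v, f x := by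
    intro u v huv
    rw [intervalIntegral.integral_of_le huv, ← Ioc_union_Ioi_eq_Ioi huv,
      setIntegral_union Ioc_disjoint_Ioi_same measurableSet_Ioi
        hf.integrableOn hf.integrableOn]
  rcases le_total a b with hab | hab
  · exact key a b hab
  · have := key b a hab
    rw [intervalIntegral.integral_symm]
    linarith

lemma hasDerivAt_integral_Ioi {f : ℝ → ℝ} (hfc : Continuous f) (hf : Integrable f) (a : ℝ) :
    HasDerivAt (fun t => ∫ x in Ioi t, f x) (-f a) a := by
  have key : (fun t => ∫ x in Ioi t, f x)
      = fun t => (∫ x in Ioi (0:ℝ), f x) - ∫ x in (0:ℝ)..t, f x := by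
    funext t
    have := integral_Ioi_split hf 0 t
    linarith
  have hD : HasDerivAt (fun t => ∫ x in (0:ℝ)..t, f x) (f a) a :=
    intervalIntegral.integral_hasDerivAt_right hf.intervalIntegrable
      hfc.stronglyMeasurable.stronglyMeasurableAtFilter hfc.continuousAt
  rw [key]
  exact hD.const_sub _

lemma integral_poly_weight_expand {w0 : ℝ → ℝ} {A B : ℝ} (hw0c : Continuous w0)
    (hw0_pos : ∀ x, 0 < w0 x)
    (hmom : ∀ k : ℕ, Integrable (fun x : ℝ => |x| ^ k * w0 x))
    (Q : Polynomial ℝ) {K : ℕ} (hK : Q.natDegree < K) (t : ℝ) :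
    ∫ x : ℝ, Q.eval x * (w0 x * (A + B * (if t < x then (1:ℝ) else 0)))
      = ∑ k ∈ Finset.range K, Q.coeff k *
          (A * (∫ x : ℝ, x ^ k * w0 x) + B * (∫ x in Ioi t, x ^ k * w0 x)) := by
  have hintk : ∀ k : ℕ, Integrable
      (fun x : ℝ => x ^ k * (w0 x * (A + B * (if t < x then (1:ℝ) else 0)))) := by
    intro k
    have := integrable_poly_weight (A:=A) (B:=B) hw0c hw0_pos hmom (X ^ k) t
    simpa using this
  have heq : (fun x : ℝ => Q.eval x * (w0 x * (A + B * (if t < x then (1:ℝ) else 0))))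
      = fun x => ∑ k ∈ Finset.range K,
          Q.coeff k * (x ^ k * (w0 x * (A + B * (if t < x then (1:ℝ) else 0)))) := by
    funext x
    rw [eval_eq_sum_range' hK, Finset.sum_mul]
    exact Finset.sum_congr rfl fun k _ => by ring
  rw [heq, integral_finset_sum _ (fun k _ => (hintk k).const_mul _)]
  refine Finset.sum_congr rfl fun k _ => ?_
  rw [MeasureTheory.integral_const_mul]
  congr 1
  have hsplit : (fun x : ℝ => x ^ k * (w0 x * (A + B * (if t < x then (1:ℝ) else 0))))
      = fun x => A * (x ^ k * w0 x)
          + B * ((Ioi t).indicator (fun x : ℝ => x ^ k * w0 x) x) := by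
    funext x
    rw [Set.indicator_apply]
    simp only [mem_Ioi]
    split <;> ring
  rw [hsplit, integral_add ((integrable_pow_w0 hw0c hw0_pos hmom k).const_mul A)
      (((integrable_pow_w0 hw0c hw0_pos hmom k).indicator measurableSet_Ioi).const_mul B),
    MeasureTheory.integral_const_mul, MeasureTheory.integral_const_mul,
    integral_indicator measurableSet_Ioi]

lemma integral_lower_orth {w0 : ℝ → ℝ} {A B : ℝ} (hw0c : Continuous w0)
    (hw0_pos : ∀ x, 0 < w0 x)
    (hmom : ∀ k : ℕ, Integrable (fun x : ℝ => |x| ^ k * w0 x))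
    {P : ℕ → Polynomial ℝ} (hmonic : ∀ n, (P n).Monic) (hdeg : ∀ n, (P n).natDegree = n)
    (t : ℝ)
    (horth : ∀ j k, j ≠ k → ∫ x : ℝ, (P j).eval x * (P k).eval x
        * (w0 x * (A + B * (if t < x then (1:ℝ) else 0))) = 0)
    (n : ℕ) :
    ∀ m, m ≤ n → ∀ Q : Polynomial ℝ, Q.natDegree ≤ m →
      ∫ x : ℝ, Q.eval x * (P n).eval x * (w0 x * (A + B * (if t < x then (1:ℝ) else 0)))
        = Q.coeff n * ∫ x : ℝ, (P n).eval x * (P n).eval x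
            * (w0 x * (A + B * (if t < x then (1:ℝ) else 0))) := by
  have hintp : ∀ R S : Polynomial ℝ, Integrable (fun x : ℝ =>
      R.eval x * S.eval x * (w0 x * (A + B * (if t < x then (1:ℝ) else 0)))) := by
    intro R S
    have := integrable_poly_weight (A:=A) (B:=B) hw0c hw0_pos hmom (R * S) t
    refine this.congr (Filter.Eventually.of_forall fun x => ?_)
    simp only [eval_mul]
  have hP0 : P 0 = 1 := (hmonic 0).natDegree_eq_zero.mp (hdeg 0)
  have hPcoeff : ∀ m, (P m).coeff m = 1 := by
    intro m
    have := (hmonic m).leadingCoeff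
    rwa [leadingCoeff, hdeg] at this
  intro m
  induction m with
  | zero =>
    intro _ Q hQ
    have hQc : Q = C (Q.coeff 0) := Polynomial.eq_C_of_natDegree_le_zero hQ
    have hL : ∫ x : ℝ, Q.eval x * (P n).eval x * (w0 x * (A + B * (if t < x then (1:ℝ) else 0)))
        = Q.coeff 0 * ∫ x : ℝ, (P 0).eval x * (P n).eval x
            * (w0 x * (A + B * (if t < x then (1:ℝ) else 0))) := by
      rw [← MeasureTheory.integral_const_mul]
      congr 1; funext x
      rw [hQc]; simp [hP0]; ring
    rcases Nat.eq_zero_or_pos n with hn | hn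
    · subst hn
      rw [hL]
    · have hco : Q.coeff n = 0 := by
        rw [hQc]; simp [coeff_C, Nat.pos_iff_ne_zero.mp hn]
      rw [hL, horth 0 n (by omega), hco, mul_zero, zero_mul]
  | succ m ih =>
    intro hm Q hQ
    set R := Q - C (Q.coeff (m+1)) * P (m+1) with hR
    have hRd : R.natDegree ≤ m := by
      refine natDegree_le_iff_coeff_eq_zero.mpr fun N hN => ?_
      rw [hR, coeff_sub, coeff_C_mul]
      rcases eq_or_lt_of_le (Nat.succ_le_of_lt hN) with hNm | hNm
      · rw [← hNm, hPcoeff, mul_one, sub_self]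
      · have h1 : Q.coeff N = 0 := coeff_eq_zero_of_natDegree_lt (lt_of_le_of_lt hQ hNm)
        have h2 : (P (m+1)).coeff N = 0 := coeff_eq_zero_of_natDegree_lt (by rw [hdeg]; exact hNm)
        rw [h1, h2, mul_zero, sub_zero]
    have hQx : ∀ x : ℝ, Q.eval x * (P n).eval x * (w0 x * (A + B * (if t < x then (1:ℝ) else 0)))
        = Q.coeff (m+1) * ((P (m+1)).eval x * (P n).eval x
            * (w0 x * (A + B * (if t < x then (1:ℝ) else 0))))
          + R.eval x * (P n).eval x * (w0 x * (A + B * (if t < x then (1:ℝ) else 0))) := by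
      intro x
      rw [hR]; simp only [eval_sub, eval_mul, eval_C]; ring
    rw [show (fun x : ℝ => Q.eval x * (P n).eval x
          * (w0 x * (A + B * (if t < x then (1:ℝ) else 0)))) = _ from funext hQx]
    rw [integral_add ((hintp (P (m+1)) (P n)).const_mul _) (hintp R (P n)),
      MeasureTheory.integral_const_mul,
      ih (by omega) R hRd]
    rcases eq_or_lt_of_le hm with hmn | hmn
    · rw [hmn] at hR ⊢
      have hRc : R.coeff n = 0 := by
        rw [hR, coeff_sub, coeff_C_mul, hPcoeff, mul_one, sub_self]
      rw [hRc, zero_mul, add_zero]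
    · rw [horth (m+1) n (by omega), mul_zero, zero_add]
      have hRc : R.coeff n = 0 := coeff_eq_zero_of_natDegree_lt (by omega)
      have hQc : Q.coeff n = 0 := coeff_eq_zero_of_natDegree_lt (by omega)
      rw [hRc, hQc]

end Helpers

/-- For the weight `w(x;t) = w0(x)(A + Bθ(x−t))`, the sub-leading coefficient
`p(n,t)` of the monic orthogonal polynomial `P_n(x;t)` satisfies
`d/dt p(n,t) = r_n(t)` with `r_n(t) = B w0(t) P_n(t;t) P_{n-1}(t;t) / h_{n-1}(t)`,
and hence `α_n'(t) = r_n(t) − r_{n+1}(t)` for `α_n(t) = p(n,t) − p(n+1,t)`. -/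
theorem dt_subleading_eq_rn
    (w0 : ℝ → ℝ) (A B : ℝ) (P : ℝ → ℕ → Polynomial ℝ) (h : ℕ → ℝ → ℝ)
    (hw0_smooth : ContDiff ℝ (⊤ : ℕ∞) w0)
    (hw0_pos : ∀ x, 0 < w0 x)
    (hmom : ∀ k : ℕ, Integrable (fun x : ℝ => |x| ^ k * w0 x))
    (hA : 0 ≤ A) (hAB : 0 ≤ A + B) (hnz : ¬(A = 0 ∧ A + B = 0))
    (hmonic : ∀ t n, (P t n).Monic)
    (hdeg : ∀ t n, (P t n).natDegree = n)
    (horth : ∀ t, ∀ j k, j ≠ k →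
      ∫ x : ℝ, (P t j).eval x * (P t k).eval x
        * (w0 x * (A + B * (if t < x then (1 : ℝ) else 0))) = 0)
    (hh : ∀ n t, h n t =
      ∫ x : ℝ, ((P t n).eval x) ^ 2
        * (w0 x * (A + B * (if t < x then (1 : ℝ) else 0))))
    (hPdiff : ∀ n k, Differentiable ℝ (fun t => (P t n).coeff k)) :
    (∀ n, 1 ≤ n → ∀ t, deriv (fun s => (P s n).coeff (n - 1)) t
      = B * w0 t * (P t n).eval t * (P t (n - 1)).eval t / h (n - 1) t) ∧
    (∀ n, 1 ≤ n → ∀ t,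
      deriv (fun s => (P s n).coeff (n - 1) - (P s (n + 1)).coeff n) t
        = B * w0 t * (P t n).eval t * (P t (n - 1)).eval t / h (n - 1) t
          - B * w0 t * (P t (n + 1)).eval t * (P t n).eval t / h n t) := by
  have hw0c : Continuous w0 := hw0_smooth.continuous
  have hne : ∀ (s : ℝ) m, P s m ≠ 0 := fun s m => (hmonic s m).ne_zero
  have hPcoeffm : ∀ (s : ℝ) m, (P s m).coeff m = 1 := by
    intro s m
    have := (hmonic s m).leadingCoeff
    rwa [leadingCoeff, hdeg] at this
  have main : ∀ n, 1 ≤ n → ∀ t, deriv (fun s => (P s n).coeff (n - 1)) t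
      = B * w0 t * (P t n).eval t * (P t (n - 1)).eval t / h (n - 1) t := by
    intro n hn t
    set K := 2 * n with hKdef
    set M : ℕ → ℝ := fun k => ∫ x : ℝ, x ^ k * w0 x with hM
    set G : ℕ → ℝ → ℝ := fun k s => ∫ x in Set.Ioi s, x ^ k * w0 x with hG
    set c : ℕ → ℝ → ℝ := fun k s => (P s n * P s (n-1)).coeff k with hcdef
    have hprodddeg : ∀ s : ℝ, (P s n * P s (n-1)).natDegree < K := by
      intro s
      rw [natDegree_mul (hne s n) (hne s (n-1)), hdeg, hdeg]
      omega
    have hcsum : ∀ k, c k = fun s => ∑ ij ∈ Finset.HasAntidiagonal.antidiagonal k,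
        (P s n).coeff ij.1 * (P s (n-1)).coeff ij.2 := by
      intro k; funext s
      exact coeff_mul _ _ _
    have hcdiff : ∀ k, Differentiable ℝ (c k) := by
      intro k; rw [hcsum k]
      exact Differentiable.fun_sum fun ij _ => (hPdiff n ij.1).mul (hPdiff (n-1) ij.2)
    have hGd : ∀ k, HasDerivAt (G k) (-(t ^ k * w0 t)) t := fun k =>
      hasDerivAt_integral_Ioi ((continuous_pow k).mul hw0c)
        (integrable_pow_w0 hw0c hw0_pos hmom k) t
    have hterm : ∀ k ∈ Finset.range K,
        HasDerivAt (fun s => c k s * (A * M k + B * G k s))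
          (deriv (c k) t * (A * M k + B * G k t) + c k t * (B * -(t ^ k * w0 t))) t :=
      fun k _ => ((hcdiff k).differentiableAt.hasDerivAt).mul
        (((hGd k).const_mul B).const_add (A * M k))
    have hFd : HasDerivAt (fun s => ∑ k ∈ Finset.range K, c k s * (A * M k + B * G k s))
        (∑ k ∈ Finset.range K,
          (deriv (c k) t * (A * M k + B * G k t) + c k t * (B * -(t ^ k * w0 t)))) t :=
      HasDerivAt.fun_sum hterm
    have hF0 : (fun s => ∑ k ∈ Finset.range K, c k s * (A * M k + B * G k s))
        = fun _ => (0:ℝ) := by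
      funext s
      have hexp := integral_poly_weight_expand (A:=A) (B:=B) hw0c hw0_pos hmom
        (P s n * P s (n-1)) (hprodddeg s) s
      have h2 := horth s n (n-1) (by omega)
      have h3 : ∫ x : ℝ, (P s n * P s (n-1)).eval x
          * (w0 x * (A + B * (if s < x then (1:ℝ) else 0))) = 0 := by
        have heq : (fun x : ℝ => (P s n * P s (n-1)).eval x
            * (w0 x * (A + B * (if s < x then (1:ℝ) else 0))))
            = fun x => (P s n).eval x * (P s (n-1)).eval x
                * (w0 x * (A + B * (if s < x then (1:ℝ) else 0))) :=
          funext fun x => by rw [eval_mul]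
        rw [heq]; exact h2
      rw [← hexp]
      exact h3
    have hzero : HasDerivAt (fun s => ∑ k ∈ Finset.range K, c k s * (A * M k + B * G k s))
        (0:ℝ) t := by
      rw [hF0]; exact hasDerivAt_const t 0
    have hsum0 : ∑ k ∈ Finset.range K,
        (deriv (c k) t * (A * M k + B * G k t) + c k t * (B * -(t ^ k * w0 t))) = 0 :=
      hFd.unique hzero
    rw [Finset.sum_add_distrib] at hsum0
    have hY : ∑ k ∈ Finset.range K, c k t * (B * -(t ^ k * w0 t))
        = -(B * w0 t * ((P t n).eval t * (P t (n-1)).eval t)) := by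
      have hc1 : ∀ k ∈ Finset.range K, c k t * (B * -(t ^ k * w0 t))
          = -(B * w0 t) * (c k t * t ^ k) := fun k _ => by ring
      rw [Finset.sum_congr rfl hc1, ← Finset.mul_sum]
      have heval : ∑ k ∈ Finset.range K, c k t * t ^ k
          = (P t n).eval t * (P t (n-1)).eval t := by
        rw [← eval_mul]
        exact (eval_eq_sum_range' (hprodddeg t) t).symm
      rw [heval]; ring
    -- the time-derivative polynomials
    set DP : ℕ → Polynomial ℝ := fun m => ∑ k ∈ Finset.range (m+1),
      monomial k (deriv (fun s => (P s m).coeff k) t) with hDPdef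
    have hDPcoeff : ∀ m i, (DP m).coeff i = deriv (fun s => (P s m).coeff i) t := by
      intro m i
      rw [hDPdef]
      rw [finset_sum_coeff]
      simp only [coeff_monomial]
      rw [Finset.sum_ite_eq' (Finset.range (m+1)) i]
      split
      · rfl
      · rename_i hi
        have hi' : m < i := by simpa [Finset.mem_range] using hi
        have hzf : (fun s => (P s m).coeff i) = fun _ => (0:ℝ) :=
          funext fun s => coeff_eq_zero_of_natDegree_lt (by rw [hdeg]; exact hi')
        rw [hzf, deriv_const]
    have hDPdeg : ∀ m, (DP m).natDegree ≤ m := by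
      intro m
      refine natDegree_le_iff_coeff_eq_zero.mpr fun N hN => ?_
      rw [hDPcoeff]
      have hzf : (fun s => (P s m).coeff N) = fun _ => (0:ℝ) :=
        funext fun s => coeff_eq_zero_of_natDegree_lt (by rw [hdeg]; exact hN)
      rw [hzf, deriv_const]
    have hDPn_deg : (DP n).natDegree ≤ n - 1 := by
      refine natDegree_le_iff_coeff_eq_zero.mpr fun N hN => ?_
      rw [hDPcoeff]
      rcases eq_or_lt_of_le (show n ≤ N by omega) with hNn | hNn
      · have hof : (fun s => (P s n).coeff N) = fun _ => (1:ℝ) :=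
          funext fun s => by rw [← hNn]; exact hPcoeffm s n
        rw [hof, deriv_const]
      · have hzf : (fun s => (P s n).coeff N) = fun _ => (0:ℝ) :=
          funext fun s => coeff_eq_zero_of_natDegree_lt (by rw [hdeg]; exact hNn)
        rw [hzf, deriv_const]
    set D : Polynomial ℝ := DP n * P t (n-1) + P t n * DP (n-1) with hDdef
    have hDcoeff : ∀ k, D.coeff k = deriv (c k) t := by
      intro k
      rw [hcsum k, deriv_fun_sum fun ij _ =>
        ((hPdiff n ij.1).mul (hPdiff (n-1) ij.2)).differentiableAt]
      rw [hDdef, coeff_add, coeff_mul, coeff_mul, ← Finset.sum_add_distrib]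
      refine Finset.sum_congr rfl fun ij _ => ?_
      rw [deriv_fun_mul (hPdiff n ij.1).differentiableAt (hPdiff (n-1) ij.2).differentiableAt,
        hDPcoeff, hDPcoeff]
    have hDdeg : D.natDegree < K := by
      refine lt_of_le_of_lt (natDegree_add_le _ _) (max_lt ?_ ?_)
      · refine lt_of_le_of_lt (natDegree_mul_le) ?_
        have := hDPn_deg
        rw [hdeg]
        omega
      · refine lt_of_le_of_lt (natDegree_mul_le) ?_
        have := hDPdeg (n-1)
        rw [hdeg]
        omega
    have hXint : ∑ k ∈ Finset.range K, deriv (c k) t * (A * M k + B * G k t)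
        = ∫ x : ℝ, D.eval x * (w0 x * (A + B * (if t < x then (1:ℝ) else 0))) := by
      rw [integral_poly_weight_expand (A:=A) (B:=B) hw0c hw0_pos hmom D hDdeg t]
      exact Finset.sum_congr rfl fun k _ => by rw [hDcoeff]
    have hintp : ∀ R S : Polynomial ℝ, Integrable (fun x : ℝ =>
        R.eval x * S.eval x * (w0 x * (A + B * (if t < x then (1:ℝ) else 0)))) := by
      intro R S
      have := integrable_poly_weight (A:=A) (B:=B) hw0c hw0_pos hmom (R * S) t
      refine this.congr (Filter.Eventually.of_forall fun x => ?_)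
      simp only [eval_mul]
    have hDint : ∫ x : ℝ, D.eval x * (w0 x * (A + B * (if t < x then (1:ℝ) else 0)))
        = deriv (fun s => (P s n).coeff (n-1)) t
          * ∫ x : ℝ, (P t (n-1)).eval x * (P t (n-1)).eval x
              * (w0 x * (A + B * (if t < x then (1:ℝ) else 0))) := by
      have hsplit : (fun x : ℝ => D.eval x * (w0 x * (A + B * (if t < x then (1:ℝ) else 0))))
          = fun x => (DP n).eval x * (P t (n-1)).eval x
                * (w0 x * (A + B * (if t < x then (1:ℝ) else 0)))
              + (DP (n-1)).eval x * (P t n).eval x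
                * (w0 x * (A + B * (if t < x then (1:ℝ) else 0))) := by
        funext x
        rw [hDdef]; simp only [eval_add, eval_mul]; ring
      rw [hsplit, integral_add (hintp _ _) (hintp _ _)]
      have h1 := integral_lower_orth (A:=A) (B:=B) hw0c hw0_pos hmom
        (hmonic t) (hdeg t) t (horth t) (n-1) (n-1) le_rfl (DP n) hDPn_deg
      have h2 := integral_lower_orth (A:=A) (B:=B) hw0c hw0_pos hmom
        (hmonic t) (hdeg t) t (horth t) n (n-1) (by omega) (DP (n-1)) (hDPdeg (n-1))
      have h2z : (DP (n-1)).coeff n = 0 :=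
        coeff_eq_zero_of_natDegree_lt (lt_of_le_of_lt (hDPdeg (n-1)) (by omega))
      rw [h1, h2, h2z, zero_mul, add_zero, hDPcoeff]
    have hpos : 0 < h (n-1) t := by
      rw [hh]
      exact integral_sq_weight_pos (A:=A) (B:=B) hw0c hw0_pos hmom hA hAB hnz _
        (hne t (n-1)) t
    rw [eq_div_iff hpos.ne']
    have hhsq : h (n-1) t = ∫ x : ℝ, (P t (n-1)).eval x * (P t (n-1)).eval x
        * (w0 x * (A + B * (if t < x then (1:ℝ) else 0))) := by
      rw [hh]; congr 1; funext x; ring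
    rw [hhsq]
    rw [hXint, hDint, hY] at hsum0
    linarith
  refine ⟨main, fun n hn t => ?_⟩
  have hd1 : DifferentiableAt ℝ (fun s => (P s n).coeff (n-1)) t :=
    (hPdiff n (n-1)).differentiableAt
  have hd2 : DifferentiableAt ℝ (fun s => (P s (n+1)).coeff n) t :=
    (hPdiff (n+1) n).differentiableAt
  rw [deriv_fun_sub hd1 hd2, main n hn t]
  have h2 := main (n+1) (by omega) t
  simp only [Nat.add_sub_cancel] at h2
  rw [h2]
end
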